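/- arXiv:math/0101197 — 4 statements merged into one kernel-verified Lean document; each statement's English description precedes it below -/
import Mathlib

section
/- Let r ≥ 1, let s_1,…,s_r be positive integers and let t_1,…,t_r be positive reals. Then there is a constant C (depending only on s_1,…,s_r,t_1,…,t_r) such that for all sufficiently large n, the size Ramsey number satisfies r̂(K_{s_1,⌊t_1·n⌋},…,K_{s_r,⌊t_r·n⌋}) ≤ C·n. In fact, with s = max_i s_i, t = max_i t_i, v_1 = (s−1)r+1 and v_2 = ⌈r·t·n·C(v_1,s)⌉, the graph K_{v_1,v_2} arrows (K_{s,⌊t·n⌋},…,K_{s,⌊t·n⌋}) (r entries). -/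
open Finset Filter

/-! ### Graph-side definitions -/

/-- `G` arrows the tuple `F` of graphs: for every `r`-colouring of the (pairs of vertices of) `G`
there are a colour `i` and a copy of `F i` in `G` all of whose edges have colour `i`. -/
def GArrows {U : Type*} (G : SimpleGraph U) {r : ℕ} {W : Fin r → Type*}
    (F : ∀ i, SimpleGraph (W i)) : Prop :=
  ∀ c : Sym2 U → Fin r, ∃ (i : Fin r) (φ : W i ↪ U),
    ∀ a b, (F i).Adj a b → G.Adj (φ a) (φ b) ∧ c s(φ a, φ b) = i

/-- The size Ramsey number of the tuple of complete bipartite graphs `K_{s i, τ i}`: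
the least number of edges of a (finite-size) graph arrowing the tuple. -/
noncomputable def sizeRamseyK (r : ℕ) (s τ : Fin r → ℕ) : ℕ :=
  sInf {m : ℕ | ∃ (U : Type) (G : SimpleGraph U), G.edgeSet.Finite ∧
    GArrows G (fun i : Fin r => completeBipartiteGraph (Fin (s i)) (Fin (τ i))) ∧
    G.edgeSet.ncard = m}

/-- Two-graph arrowing `G → (F₁, F₂)`. -/
def GArrows2 {U W1 W2 : Type*} (G : SimpleGraph U)
    (F1 : SimpleGraph W1) (F2 : SimpleGraph W2) : Prop :=
  ∀ c : Sym2 U → Fin 2,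
    (∃ φ : W1 ↪ U, ∀ a b, F1.Adj a b → G.Adj (φ a) (φ b) ∧ c s(φ a, φ b) = 0) ∨
    (∃ φ : W2 ↪ U, ∀ a b, F2.Adj a b → G.Adj (φ a) (φ b) ∧ c s(φ a, φ b) = 1)

/-- The size Ramsey number `r̂(F₁,F₂)`. -/
noncomputable def sizeRamsey2 {W1 W2 : Type*} (F1 : SimpleGraph W1) (F2 : SimpleGraph W2) : ℕ :=
  sInf {m : ℕ | ∃ (U : Type) (G : SimpleGraph U), G.edgeSet.Finite ∧
    GArrows2 G F1 F2 ∧ G.edgeSet.ncard = m}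

/-- `F` is isomorphic to a subgraph of `G`. -/
def IsSubgraphOf {U U' : Type*} (F : SimpleGraph U) (G : SimpleGraph U') : Prop :=
  ∃ φ : U ↪ U', ∀ a b, F.Adj a b → G.Adj (φ a) (φ b)

/-- The bipartite graph on `α ⊕ β` determined by the relation `E`. -/
def bipAdj {α β : Type*} (E : α → β → Prop) : SimpleGraph (α ⊕ β) where
  Adj x y := (∃ a b, x = Sum.inl a ∧ y = Sum.inr b ∧ E a b) ∨
             (∃ a b, x = Sum.inr b ∧ y = Sum.inl a ∧ E a b)
  symm := by
    constructor
    rintro x y (⟨a, b, rfl, rfl, h⟩ | ⟨a, b, rfl, rfl, h⟩)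
    · exact Or.inr ⟨a, b, rfl, rfl, h⟩
    · exact Or.inl ⟨a, b, rfl, rfl, h⟩
  loopless := by
    constructor
    rintro x (⟨a, b, rfl, h, _⟩ | ⟨a, b, rfl, h, _⟩) <;> simp at h

/-! ### Weights -/

section Weights

variable {V : Type*} [Fintype V] [DecidableEq V]

/-- A weight consists of non-negative values indexed by the subsets of a finite set. -/
def IsWeight (f : Finset V → ℝ) : Prop := ∀ A, 0 ≤ f A

/-- The size `e(f)` of a weight. -/
noncomputable def wsize (f : Finset V → ℝ) : ℝ := ∑ A : Finset V, f A * A.card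

/-- The degree of a vertex in a weight. -/
noncomputable def wdeg (f : Finset V → ℝ) (x : V) : ℝ :=
  ∑ A : Finset V, if x ∈ A then f A else 0

/-- The tuple `P` consists of pairwise disjoint sets. -/
def PairDisj {r : ℕ} (P : Fin r → Finset V) : Prop :=
  ∀ i j : Fin r, i ≠ j → Disjoint (P i) (P j)

open Classical in
/-- `c` is an `r`-colouring of the weight `g`: a family of non-negative reals indexed by
`r`-tuples of pairwise disjoint subsets such that for every `A` the total `c`-mass of the
tuples partitioning `A` exceeds `g A`. -/
def IsColouring {r : ℕ} (g : Finset V → ℝ) (c : (Fin r → Finset V) → ℝ) : Prop :=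
  (∀ P, 0 ≤ c P) ∧ (∀ P, ¬ PairDisj P → c P = 0) ∧
  ∀ A : Finset V,
    g A < ∑ P : Fin r → Finset V,
      if PairDisj P ∧ Finset.univ.biUnion P = A then c P else 0

open Classical in
/-- The `i`-th colour subweight of the colouring `c`. -/
noncomputable def subw {r : ℕ} (c : (Fin r → Finset V) → ℝ) (i : Fin r) :
    Finset V → ℝ :=
  fun A => ∑ P : Fin r → Finset V, if PairDisj P ∧ P i = A then c P else 0

end Weights

/-- `F ⊂ f` for a graph `F` and a weight `f`: for some bipartition of `F` (given by the
class `S` and its complement) there is an injection `h` of `S` into the vertex set of `f`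
such that the image of the neighbourhood of every vertex outside `S` is contained in some
set of positive weight. -/
def GraphSubW {U V : Type*} [Fintype V] [DecidableEq V]
    (F : SimpleGraph U) (f : Finset V → ℝ) : Prop :=
  ∃ (S : Set U) (h : U → V),
    (∀ a b, F.Adj a b → (a ∈ S ↔ b ∉ S)) ∧
    Set.InjOn h S ∧
    ∀ y, y ∉ S → ∃ B : Finset V, 0 < f B ∧ ∀ x ∈ S, F.Adj x y → h x ∈ B

/-- The weight `g` extended by new vertices (a copy of `V`); the extension vanishes on
every set containing a new vertex. -/
noncomputable def wext {W : Type*} [Fintype W] [DecidableEq W]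
    (g : Finset W → ℝ) (V : Type*) [Fintype V] [DecidableEq V] :
    Finset (W ⊕ V) → ℝ := fun B =>
  if _h : ∀ b ∈ B, b.isLeft = true then
    g (B.preimage Sum.inl Sum.inl_injective.injOn)
  else 0

/-- Fractional containment of weights (without enlarging the target). -/
def WeightSubRaw {V W : Type*} [Fintype V] [DecidableEq V] [Fintype W] [DecidableEq W]
    (f : Finset V → ℝ) (g : Finset W → ℝ) : Prop :=
  ∃ (h : V ↪ W) (w : Finset V → Finset W → ℝ),
    (∀ A B, 0 ≤ w A B) ∧
    (∀ A B, ¬ A.map h ⊆ B → w A B = 0) ∧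
    (∀ A, f A ≤ ∑ B : Finset W, if A.map h ⊆ B then w A B else 0) ∧
    (∀ B, (∑ A : Finset V, if A.map h ⊆ B then w A B else 0) ≤ g B)

/-- `f ⊂ g` for weights: fractional containment of `f` in `g`, where `g` is first
enlarged by new vertices (carrying zero weight) so that `v(f) ≤ v(g)`. -/
def WeightSub {V W : Type*} [Fintype V] [DecidableEq V] [Fintype W] [DecidableEq W]
    (f : Finset V → ℝ) (g : Finset W → ℝ) : Prop :=
  WeightSubRaw f (wext g V)

/-! ### Dilatations -/

/-- `F^A`: the set of vertices of the second class whose neighbourhood is exactly `A`. -/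
def fiber {V β : Type*} (E : V → β → Prop) (A : Finset V) : Set β :=
  {y | ∀ x, E x y ↔ x ∈ A}

/-- The sequence of bipartite graphs (with first class `V` and second classes `W n`,
edge relations `E n`) is a dilatation of the weight `f`: each member agrees with `f`
and `|Fₙ^A| = f A · n + o(n)` for every `A ⊆ V`. -/
def Dilatation {V : Type*} [Fintype V] [DecidableEq V] (f : Finset V → ℝ)
    (W : ℕ → Type) (E : ∀ n, V → W n → Prop) : Prop :=
  (∀ n A, fiber (E n) A = ∅ ↔ f A = 0) ∧
  ∀ A, Tendsto (fun n : ℕ => ((fiber (E n) A).ncard : ℝ) / n) atTop (nhds (f A))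

/-! ### Arrowing for weights -/

/-- The weight `g` arrows the tuple `(f₁,…,f_q, F_{q+1},…,F_r)` (weights `f i`, bipartite
graphs given by the relations `E j`): every `r`-colouring of `g` contains some `f i` in its
`i`-th colour subweight or some `F j` in the corresponding colour subweight. -/
def WArrows (r q : ℕ) (hqr : q ≤ r)
    (Vf : Fin q → Type) [∀ i, Fintype (Vf i)] [∀ i, DecidableEq (Vf i)]
    (f : ∀ i, Finset (Vf i) → ℝ)
    (α β : Fin (r - q) → Type)
    (E : ∀ j, α j → β j → Prop)
    (V : Type) [Fintype V] [DecidableEq V] (g : Finset V → ℝ) : Prop :=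
  ∀ c : (Fin r → Finset V) → ℝ, IsColouring g c →
    (∃ i : Fin q, WeightSub (f i) (subw c (Fin.castLE hqr i))) ∨
    (∃ j : Fin (r - q), GraphSubW (bipAdj (E j))
      (subw c ⟨q + (j : ℕ), by have := j.isLt; omega⟩))

/-- `r̂(F)` for a tuple of weights and bipartite graphs: the infimum of the sizes of the
arrowing weights. -/
noncomputable def rhatW (r q : ℕ) (hqr : q ≤ r)
    (Vf : Fin q → Type) [∀ i, Fintype (Vf i)] [∀ i, DecidableEq (Vf i)]
    (f : ∀ i, Finset (Vf i) → ℝ)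
    (α β : Fin (r - q) → Type)
    (E : ∀ j, α j → β j → Prop) : ℝ :=
  sInf {x : ℝ | ∃ (V : Type) (_ : Fintype V) (_ : DecidableEq V) (g : Finset V → ℝ),
    IsWeight g ∧ WArrows r q hqr Vf f α β E V g ∧ x = wsize g}

/-- Graph arrowing for a mixed tuple of bipartite graphs: the first `q` coordinates are the
bipartite graphs given by `Ed`, the last `r - q` those given by `E`. -/
def GArrowsMix (r q : ℕ) (hqr : q ≤ r)
    {W1 W2 : Fin q → Type} (Ed : ∀ i, W1 i → W2 i → Prop)
    {α β : Fin (r - q) → Type} (E : ∀ j, α j → β j → Prop)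
    {U : Type} (G : SimpleGraph U) : Prop :=
  ∀ c : Sym2 U → Fin r,
    (∃ (i : Fin q) (φ : (W1 i ⊕ W2 i) ↪ U),
      ∀ a b, (bipAdj (Ed i)).Adj a b →
        G.Adj (φ a) (φ b) ∧ c s(φ a, φ b) = Fin.castLE hqr i) ∨
    (∃ (j : Fin (r - q)) (φ : (α j ⊕ β j) ↪ U),
      ∀ a b, (bipAdj (E j)).Adj a b →
        G.Adj (φ a) (φ b) ∧ c s(φ a, φ b) = ⟨q + (j : ℕ), by have := j.isLt; omega⟩)

/-- The size Ramsey number of a mixed tuple of bipartite graphs. -/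
noncomputable def sizeRamseyMix (r q : ℕ) (hqr : q ≤ r)
    {W1 W2 : Fin q → Type} (Ed : ∀ i, W1 i → W2 i → Prop)
    {α β : Fin (r - q) → Type} (E : ∀ j, α j → β j → Prop) : ℕ :=
  sInf {m : ℕ | ∃ (U : Type) (G : SimpleGraph U), G.edgeSet.Finite ∧
    GArrowsMix r q hqr Ed E G ∧ G.edgeSet.ncard = m}

/-- The weight `k_{s,t}` on `{1,…,s}`, with value `t` on the full set and `0` elsewhere. -/
noncomputable def kst (s : ℕ) (t : ℝ) : Finset (Fin s) → ℝ :=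
  fun A => if A = Finset.univ then t else 0

/-- `Π_s`: tuples `a` of non-negative integers with `a i = s i - 1` for `i > q` and
`∑ a i = sv`. -/
def PiS (r q : ℕ) (s : Fin r → ℕ) (sv : ℕ) : Finset (Fin r → ℕ) :=
  (Fintype.piFinset fun _ : Fin r => Finset.range (sv + 1)).filter
    (fun a => (∀ i : Fin r, q ≤ (i : ℕ) → a i = s i - 1) ∧ ∑ i, a i = sv)

/-- `sol(L_s)`: the optimal value of the linear program `L_s`. -/
noncomputable def solL (r q : ℕ) (hqr : q ≤ r) (s : Fin r → ℕ) (t : Fin q → ℝ)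
    (sv : ℕ) : ℝ :=
  sSup {x : ℝ | ∃ w : (Fin r → ℕ) → ℝ, (∀ a, 0 ≤ w a) ∧
    (∀ i : Fin q, ∑ a ∈ PiS r q s sv,
        w a * ((a (Fin.castLE hqr i)).choose (s (Fin.castLE hqr i)) : ℝ)
      ≤ t i * (sv.choose (s (Fin.castLE hqr i)) : ℝ)) ∧
    x = ∑ a ∈ PiS r q s sv, w a}

/-! With `v₁ = (s-1)r+1`, pigeonhole gives every right vertex of `K_{v₁,v₂}` an `s`-set of left
neighbours joined to it in a single colour. A second pigeonhole over the `r·C(v₁,s)` possible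
(colour, `s`-set) pairs yields `⌊tn⌋` right vertices with the same pair, i.e. a monochromatic
`K_{s,⌊tn⌋}`, as soon as `v₂ > r·C(v₁,s)·(⌊tn⌋-1)`. As `v₂ ≈ r·t·n·C(v₁,s)`, the number `v₁v₂`
of edges is linear in `n`, and each `K_{sᵢ,⌊tᵢn⌋}` is a subgraph of `K_{s,⌊tn⌋}`. -/

lemma Fintype.exists_card_eq_forall_eq_of_mul_lt_card {α β : Type*} [Fintype α] [Fintype β]
    [DecidableEq β] (f : α → β) {n : ℕ} (h : Fintype.card β * (n - 1) < Fintype.card α) :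
    ∃ b, ∃ A : Finset α, #A = n ∧ ∀ x ∈ A, f x = b := by
  classical
  obtain ⟨b, hb⟩ := Fintype.exists_lt_card_fiber_of_mul_lt_card f h
  obtain ⟨A, hA, hAcard⟩ := Finset.exists_subset_card_eq (show n ≤ #{x | f x = b} by omega)
  exact ⟨b, A, hAcard, fun x hx => (Finset.mem_filter.1 (hA hx)).2⟩

lemma Finset.exists_fin_embedding {α : Type*} (A : Finset α) {n : ℕ} (h : #A = n) :
    ∃ φ : Fin n ↪ α, ∀ x, φ x ∈ A :=
  ⟨(A.equivFinOfCardEq h).symm.toEmbedding.trans (Function.Embedding.subtype _),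
    fun x => ((A.equivFinOfCardEq h).symm x).2⟩

lemma ncard_edgeSet_completeBipartiteGraph (a b : ℕ) :
    (completeBipartiteGraph (Fin a) (Fin b)).edgeSet.ncard = a * b := by
  simp [Set.ncard, SimpleGraph.encard_edgeSet_completeBipartiteGraph]

lemma GArrows.mono {U : Type*} {G : SimpleGraph U} {r : ℕ} {W W' : Fin r → Type*}
    {F : ∀ i, SimpleGraph (W i)} {F' : ∀ i, SimpleGraph (W' i)}
    (hF : ∀ i, IsSubgraphOf (F' i) (F i)) (h : GArrows G F) : GArrows G F' := by
  intro c
  obtain ⟨i, φ, hφ⟩ := h c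
  obtain ⟨ψ, hψ⟩ := hF i
  exact ⟨i, ψ.trans φ, fun a b hab => hφ _ _ (hψ a b hab)⟩

lemma isSubgraphOf_completeBipartiteGraph {α α' β β' : Type*} (φ : α' ↪ α) (ψ : β' ↪ β) :
    IsSubgraphOf (completeBipartiteGraph α' β') (completeBipartiteGraph α β) :=
  ⟨φ.sumMap ψ, by rintro (x | y) (x' | y') <;> simp⟩

lemma completeBipartiteGraph_arrows {α β : Type*} [Fintype α] [Fintype β] {r s M : ℕ}
    (hα : r * (s - 1) < Fintype.card α)
    (hβ : r * (Fintype.card α).choose s * (M - 1) < Fintype.card β) :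
    GArrows (completeBipartiteGraph α β)
      (fun _ : Fin r => completeBipartiteGraph (Fin s) (Fin M)) := by
  classical
  intro c
  have star : ∀ y : β, ∃ p : Fin r × {A : Finset α // #A = s},
      ∀ x ∈ p.2.1, c s(.inl x, .inr y) = p.1 := by
    intro y
    obtain ⟨i, A, hA, hAi⟩ := Fintype.exists_card_eq_forall_eq_of_mul_lt_card
      (fun x => c s(.inl x, .inr y)) (by simpa using hα)
    exact ⟨(i, ⟨A, hA⟩), hAi⟩
  choose p hp using star
  obtain ⟨⟨i, A, hA⟩, T, hT, hTp⟩ := Fintype.exists_card_eq_forall_eq_of_mul_lt_card p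
    (by simpa [mul_assoc] using hβ)
  obtain ⟨φ, hφ⟩ := A.exists_fin_embedding hA
  obtain ⟨ψ, hψ⟩ := T.exists_fin_embedding hT
  have mono : ∀ x y, c s(.inl (φ x), .inr (ψ y)) = i := by
    intro x y
    have hpy := hTp _ (hψ y)
    simpa [hpy] using hp (ψ y) (φ x) (by rw [hpy]; exact hφ x)
  refine ⟨i, φ.sumMap ψ, ?_⟩
  rintro (x | y) (x' | y') hadj <;> simp at hadj ⊢
  · exact mono x y'
  · rw [Sym2.eq_swap]; exact mono x' y

lemma sizeRamseyK_le {r : ℕ} {s τ : Fin r → ℕ} {U : Type} {G : SimpleGraph U}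
    (hG : G.edgeSet.Finite)
    (h : GArrows G fun i => completeBipartiteGraph (Fin (s i)) (Fin (τ i))) :
    sizeRamseyK r s τ ≤ G.edgeSet.ncard :=
  Nat.sInf_le ⟨U, G, hG, h, rfl⟩

lemma sizeRamseyK_le_mul {r a b s' M : ℕ} {s τ : Fin r → ℕ} (hs : ∀ i, s i ≤ s')
    (hτ : ∀ i, τ i ≤ M)
    (h : GArrows (completeBipartiteGraph (Fin a) (Fin b))
      fun _ : Fin r => completeBipartiteGraph (Fin s') (Fin M)) :
    sizeRamseyK r s τ ≤ a * b := by
  rw [← ncard_edgeSet_completeBipartiteGraph]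
  refine sizeRamseyK_le (Set.toFinite _) (h.mono fun i => ?_)
  exact isSubgraphOf_completeBipartiteGraph (Fin.castLEEmb (hs i)) (Fin.castLEEmb (hτ i))

lemma mul_pred_lt_ceil_mul {k M : ℕ} {x : ℝ} (hk : 0 < k) (hM : 1 ≤ M) (hMx : (M : ℝ) ≤ x) :
    k * (M - 1) < ⌈k * x⌉₊ := by
  have hkM : ((k * M : ℕ) : ℝ) ≤ k * x := by push_cast; gcongr
  have := Nat.cast_le.1 (hkM.trans (Nat.le_ceil _))
  have : k * (M - 1) < k * M := Nat.mul_lt_mul_of_pos_left (by omega) hk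
  omega

theorem stmt_0_general (r : ℕ) (hr : 1 ≤ r) (s : Fin r → ℕ) (t : Fin r → ℝ)
    (ht : ∀ i, 0 < t i) :
    ∃ C : ℝ, ∀ᶠ n : ℕ in atTop,
      (sizeRamseyK r s (fun i => ⌊t i * n⌋₊) : ℝ) ≤ C * n ∧
      GArrows (completeBipartiteGraph
          (Fin ((sSup (Set.range s) - 1) * r + 1))
          (Fin ⌈(r : ℝ) * sSup (Set.range t) * n *
            (((sSup (Set.range s) - 1) * r + 1).choose (sSup (Set.range s)))⌉₊))
        (fun _ : Fin r => completeBipartiteGraph (Fin (sSup (Set.range s)))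
          (Fin ⌊sSup (Set.range t) * n⌋₊)) := by
  set sM := sSup (Set.range s)
  set tM := sSup (Set.range t)
  set v₁ := (sM - 1) * r + 1
  set b := v₁.choose sM
  have hsM : ∀ i, s i ≤ sM := fun i => le_csSup (Set.finite_range s).bddAbove ⟨i, rfl⟩
  have htM : ∀ i, t i ≤ tM := fun i => le_csSup (Set.finite_range t).bddAbove ⟨i, rfl⟩
  have htM_pos : 0 < tM := (ht ⟨0, hr⟩).trans_le (htM _)
  have hb : 0 < b := Nat.choose_pos (by
    have : sM - 1 ≤ (sM - 1) * r := Nat.le_mul_of_pos_right _ hr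
    omega)
  refine ⟨v₁ * (r * tM * b + 1), ?_⟩
  filter_upwards [eventually_ge_atTop 1,
    (tendsto_natCast_atTop_atTop.const_mul_atTop htM_pos).eventually_ge_atTop 1]
    with n hn htn
  set v₂ := ⌈(r : ℝ) * tM * n * b⌉₊
  set M := ⌊tM * n⌋₊
  have hArrows : GArrows (completeBipartiteGraph (Fin v₁) (Fin v₂))
      (fun _ : Fin r => completeBipartiteGraph (Fin sM) (Fin M)) := by
    refine completeBipartiteGraph_arrows (by simp [v₁, mul_comm]) ?_
    have hv₂ : v₂ = ⌈((r * b : ℕ) : ℝ) * (tM * n)⌉₊ := by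
      simp only [v₂]; congr 1; push_cast; ring
    rw [Fintype.card_fin, Fintype.card_fin, hv₂]
    exact mul_pred_lt_ceil_mul (by positivity) (Nat.le_floor (by exact_mod_cast htn))
      (Nat.floor_le (by positivity))
  refine ⟨?_, hArrows⟩
  have hRamsey : sizeRamseyK r s (fun i => ⌊t i * n⌋₊) ≤ v₁ * v₂ :=
    sizeRamseyK_le_mul hsM (fun i => Nat.floor_le_floor (by gcongr; exact htM i)) hArrows
  have hn' : (1 : ℝ) ≤ n := by exact_mod_cast hn
  calc (sizeRamseyK r s (fun i => ⌊t i * n⌋₊) : ℝ)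
      ≤ v₁ * v₂ := by exact_mod_cast hRamsey
    _ ≤ v₁ * (r * tM * n * b + 1) := by
        gcongr; exact (Nat.ceil_lt_add_one (by positivity)).le
    _ ≤ v₁ * (r * tM * n * b + n) := by gcongr
    _ = v₁ * (r * tM * b + 1) * n := by ring

/-- With `s = max s_i`, `t = max t_i`, `v₁ = (s-1)r+1` and
`v₂ = ⌈r·t·n·C(v₁,s)⌉`, for all sufficiently large `n` we have
`r̂(K_{s₁,⌊t₁n⌋},…,K_{s_r,⌊t_r n⌋}) ≤ C·n`, and indeed `K_{v₁,v₂}` arrows the tuple of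
`r` copies of `K_{s,⌊tn⌋}`. -/
theorem stmt_0 (r : ℕ) (hr : 1 ≤ r) (s : Fin r → ℕ) (t : Fin r → ℝ)
    (hs : ∀ i, 0 < s i) (ht : ∀ i, 0 < t i) :
    ∃ C : ℝ, ∀ᶠ n : ℕ in atTop,
      (sizeRamseyK r s (fun i => ⌊t i * n⌋₊) : ℝ) ≤ C * n ∧
      GArrows (completeBipartiteGraph
          (Fin ((sSup (Set.range s) - 1) * r + 1))
          (Fin ⌈(r : ℝ) * sSup (Set.range t) * n *
            (((sSup (Set.range s) - 1) * r + 1).choose (sSup (Set.range s)))⌉₊))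
        (fun _ : Fin r => completeBipartiteGraph (Fin (sSup (Set.range s)))
          (Fin ⌊sSup (Set.range t) * n⌋₊)) :=
  stmt_0_general r hr s t ht
end

section
/- Let r ≥ 2 and q ≥ 1, let t_1,…,t_q be positive reals and s_1,…,s_r, t_{q+1},…,t_r be positive integers with t_i ≥ s_i for i ∈ {q+1,…,r}, and set F = (k_{s_1,t_1},…,k_{s_q,t_q},K_{s_{q+1},t_{q+1}},…,K_{s_r,t_r}) and σ = Σ_{i=1}^r (s_i − 1). Then every weight g with g → F has more than σ vertices of positive degree. -/
open Finset Filter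

/-! If at most `σ` vertices have positive degree, colour them by `ψ` so that colour `i` is
used fewer than `s_i` times, and send every other vertex to the first colour. Colour each set `A`
by splitting it along `ψ`, with mass `g A + ε`. A part of colour `i` with at least `s_i` vertices
then comes from a set leaving the support, which has weight `0`, so it carries only mass `ε` and
has the first colour: no colour contains `K_{s_i,t_i}`, and for small `ε` the first colour cannot
contain `k_{s_1,t_1}` either. -/

section Colourings

variable {V : Type*} [DecidableEq V]

theorem IsWeight.eq_zero_of_not_subset_support [Fintype V] {g : Finset V → ℝ} (hg : IsWeight g)
    {A : Finset V} (hA : ¬ A ⊆ univ.filter (0 < wdeg g ·)) : g A = 0 := by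
  obtain ⟨x, hxA, hx⟩ := not_subset.1 hA
  have hdeg : wdeg g x ≤ 0 := by simpa using hx
  have hle : g A ≤ wdeg g x :=
    calc g A = if x ∈ A then g A else 0 := (if_pos hxA).symm
      _ ≤ wdeg g x := single_le_sum (f := fun B => if x ∈ B then g B else 0)
        (fun B _ => by split_ifs <;> simp [hg B]) (mem_univ A)
  exact le_antisymm (hle.trans hdeg) (hg A)

omit [DecidableEq V] in
theorem exists_fiber_card_le {ι : Type*} [Fintype ι] [DecidableEq ι] (S : Finset V)
    (m : ι → ℕ) (hS : S.card ≤ ∑ i, m i) (z : ι) :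
    ∃ ψ : V → ι, (∀ x ∉ S, ψ x = z) ∧ ∀ i, (S.filter (ψ · = i)).card ≤ m i := by
  classical
  obtain ⟨e⟩ : Nonempty (S ↪ Σ i, Fin (m i)) :=
    Function.Embedding.nonempty_of_card_le (by simpa using hS)
  let ψ : V → ι := fun x => if hx : x ∈ S then (e ⟨x, hx⟩).1 else z
  let τ : V → ℕ := fun x => if hx : x ∈ S then (e ⟨x, hx⟩).2 else 0
  refine ⟨ψ, fun x hx => dif_neg hx, fun i => ?_⟩
  calc (S.filter (ψ · = i)).card ≤ (range (m i)).card := by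
        refine card_le_card_of_injOn τ (fun x hx => ?_) (fun x hx y hy hxy => ?_)
        · obtain ⟨hxS, rfl⟩ := mem_filter.1 hx
          simp [τ, ψ, hxS]
        · obtain ⟨hxS, hψx⟩ := mem_filter.1 hx
          obtain ⟨hyS, hψy⟩ := mem_filter.1 hy
          have hfst : (e ⟨x, hxS⟩).1 = (e ⟨y, hyS⟩).1 := by
            simpa [ψ, hxS, hyS] using hψx.trans hψy.symm
          have hsnd : ((e ⟨x, hxS⟩).2 : ℕ) = (e ⟨y, hyS⟩).2 := by simpa [τ, hxS, hyS] using hxy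
          simpa using e.injective (Sigma.ext hfst ((Fin.heq_ext_iff (congrArg m hfst)).2 hsnd))
    _ = m i := card_range _

def splitBy {r : ℕ} (ψ : V → Fin r) (A : Finset V) : Fin r → Finset V :=
  fun k => A.filter (ψ · = k)

omit [DecidableEq V] in
theorem pairDisj_splitBy {r : ℕ} (ψ : V → Fin r) (A : Finset V) : PairDisj (splitBy ψ A) :=
  fun _ _ hij => disjoint_filter.2 fun _ _ hi hj => hij (hi.symm.trans hj)

theorem biUnion_splitBy [Fintype V] {r : ℕ} (ψ : V → Fin r) (A : Finset V) :
    univ.biUnion (splitBy ψ A) = A := by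
  ext x
  simp [splitBy]

noncomputable def colouringOfSplit [Fintype V] {r : ℕ} (π : Finset V → Fin r → Finset V)
    (m : Finset V → ℝ) : (Fin r → Finset V) → ℝ :=
  open Classical in fun P => if P = π (univ.biUnion P) then m (univ.biUnion P) else 0

variable [Fintype V] {r : ℕ} {π : Finset V → Fin r → Finset V} {m : Finset V → ℝ}

theorem isColouring_colouringOfSplit {g : Finset V → ℝ} (hg : IsWeight g)
    (hdisj : ∀ A, PairDisj (π A)) (hunion : ∀ A, univ.biUnion (π A) = A)
    (hm : ∀ A, g A < m A) : IsColouring g (colouringOfSplit π m) := by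
  classical
  have hnonneg : ∀ P, 0 ≤ colouringOfSplit π m P := fun P => by
    unfold colouringOfSplit
    split_ifs
    exacts [(hg _).trans (hm _).le, le_rfl]
  refine ⟨hnonneg, fun P hP => ?_, fun A => ?_⟩
  · unfold colouringOfSplit
    rw [if_neg]
    rintro hP'
    exact hP (hP' ▸ hdisj _)
  · have hA : colouringOfSplit π m (π A) = m A := by simp [colouringOfSplit, hunion]
    calc g A < m A := hm A
      _ = if PairDisj (π A) ∧ univ.biUnion (π A) = A then colouringOfSplit π m (π A) else 0 := by
        rw [if_pos ⟨hdisj A, hunion A⟩, hA]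
      _ ≤ _ := single_le_sum (f := fun P =>
          if PairDisj P ∧ univ.biUnion P = A then colouringOfSplit π m P else 0)
        (fun P _ => by split_ifs <;> simp [hnonneg P]) (mem_univ (π A))

theorem subw_colouringOfSplit_le {i : Fin r} {B : Finset V} {δ : ℝ} (hδ : 0 ≤ δ)
    (hbound : ∀ A, π A i = B → m A ≤ δ) :
    subw (colouringOfSplit π m) i B ≤ Fintype.card (Fin r → Finset V) * δ := by
  classical
  rw [← nsmul_eq_mul, ← card_univ]
  refine sum_le_card_nsmul _ _ _ fun P _ => ?_
  unfold colouringOfSplit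
  split_ifs with hP hπ
  · exact hbound _ (hπ ▸ hP.2)
  all_goals exact hδ

omit [Fintype V] in
theorem card_splitBy_lt {S : Finset V} {ψ : V → Fin r} {z : Fin r} {s : Fin r → ℕ}
    (hψ : ∀ x ∉ S, ψ x = z) (hfib : ∀ k, (S.filter (ψ · = k)).card < s k)
    {A : Finset V} {k : Fin r} (hAk : A ⊆ S ∨ k ≠ z) : (splitBy ψ A k).card < s k := by
  refine (card_le_card fun x hx => ?_).trans_lt (hfib k)
  obtain ⟨hxA, rfl⟩ := mem_filter.1 hx
  refine mem_filter.2 ⟨?_, rfl⟩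
  by_contra hxS
  rcases hAk with hAS | hψz
  exacts [hxS (hAS hxA), hψz (hψ x hxS)]

theorem subw_colouringOfSplit_splitBy_le {g : Finset V → ℝ} (hg : IsWeight g) {ψ : V → Fin r}
    {z : Fin r} {s : Fin r → ℕ} (hψ : ∀ x ∉ univ.filter (0 < wdeg g ·), ψ x = z)
    (hfib : ∀ k, ((univ.filter (0 < wdeg g ·)).filter (ψ · = k)).card < s k)
    {ε : ℝ} (hε : 0 ≤ ε) {k : Fin r} {B : Finset V} (hB : s k ≤ B.card) :
    subw (colouringOfSplit (splitBy ψ) (fun A => g A + ε)) k B ≤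
      Fintype.card (Fin r → Finset V) * if k = z then ε else 0 := by
  refine subw_colouringOfSplit_le (by positivity) fun A hAk => ?_
  have hlarge : ¬ (A ⊆ univ.filter (0 < wdeg g ·) ∨ k ≠ z) := fun h =>
    (card_splitBy_lt hψ hfib h).not_ge (hAk ▸ hB)
  rw [not_or, not_not] at hlarge
  simp [hlarge.2, hg.eq_zero_of_not_subset_support hlarge.1]

end Colourings

section Containment

variable {W U : Type*} [Fintype W] [DecidableEq W] [Fintype U] [DecidableEq U]

theorem wext_le {f : Finset W → ℝ} {n : ℕ} {δ : ℝ} (hδ : 0 ≤ δ)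
    (hf : ∀ B, n ≤ B.card → f B ≤ δ) {B : Finset (W ⊕ U)} (hB : n ≤ B.card) :
    wext f U B ≤ δ := by
  unfold wext
  split_ifs with hleft
  · refine hf _ (hB.trans_eq ?_)
    rw [card_preimage, filter_true_of_mem fun x hx => ?_]
    obtain ⟨w, rfl⟩ := Sum.isLeft_iff.1 (hleft x hx)
    exact ⟨w, rfl⟩
  · exact hδ

theorem le_of_kst_weightSub {n : ℕ} {t δ : ℝ} {f : Finset W → ℝ}
    (h : WeightSub (kst n t) f) (hδ : 0 ≤ δ) (hf : ∀ B, n ≤ B.card → f B ≤ δ) :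
    t ≤ 2 ^ (Fintype.card W + n) * δ := by
  obtain ⟨h, w, hw, -, hlo, hup⟩ := h
  have hwext : ∀ B, univ.map h ⊆ B → w univ B ≤ wext f (Fin n) B := fun B hB =>
    calc w univ B = if univ.map h ⊆ B then w univ B else 0 := (if_pos hB).symm
      _ ≤ ∑ A, if A.map h ⊆ B then w A B else 0 :=
        single_le_sum (f := fun A => if A.map h ⊆ B then w A B else 0)
          (fun A _ => by split_ifs <;> simp [hw A B]) (mem_univ univ)
      _ ≤ wext f (Fin n) B := hup B
  calc t ≤ ∑ B, if univ.map h ⊆ B then w univ B else 0 := by simpa [kst] using hlo univ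
    _ ≤ ∑ _B : Finset (W ⊕ Fin n), δ := sum_le_sum fun B _ => by
        split_ifs with hB
        · exact (hwext B hB).trans (wext_le hδ hf (by simpa using card_le_card hB))
        · exact hδ
    _ = 2 ^ (Fintype.card W + n) * δ := by simp [Fintype.card_finset, Fintype.card_sum]

theorem exists_le_card_of_completeBipartite_graphSubW {α β : Type*} [Fintype α] [Fintype β]
    [Nonempty α] [Nonempty β] {f : Finset W → ℝ}
    (hF : GraphSubW (bipAdj fun (_ : α) (_ : β) => True) f) :
    ∃ B, 0 < f B ∧ min (Fintype.card α) (Fintype.card β) ≤ B.card := by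
  obtain ⟨S, h, hbip, hinj, hB⟩ := hF
  obtain ⟨a₀⟩ := ‹Nonempty α›
  obtain ⟨b₀⟩ := ‹Nonempty β›
  have hlr : ∀ a b, (bipAdj fun (_ : α) (_ : β) => True).Adj (.inl a) (.inr b) :=
    fun a b => Or.inl ⟨a, b, rfl, rfl, trivial⟩
  have hrl : ∀ a b, (bipAdj fun (_ : α) (_ : β) => True).Adj (.inr b) (.inl a) :=
    fun a b => Or.inr ⟨a, b, rfl, rfl, trivial⟩
  by_cases hb₀ : Sum.inr b₀ ∈ S
  · have hl : ∀ a, Sum.inl a ∉ S := fun a ha => (hbip _ _ (hlr a b₀)).1 ha hb₀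
    have hr : ∀ b, Sum.inr b ∈ S := fun b => by_contra fun hb => hl a₀ ((hbip _ _ (hlr a₀ b)).2 hb)
    obtain ⟨B, hpos, hmem⟩ := hB _ (hl a₀)
    refine ⟨B, hpos, min_le_right _ _ |>.trans ?_⟩
    simpa using card_le_card_of_injOn (s := univ) (fun b => h (.inr b))
      (fun b _ => hmem _ (hr b) (hrl a₀ b))
      fun b _ b' _ hbb' => Sum.inr_injective (hinj (hr b) (hr b') hbb')
  · have hl : ∀ a, Sum.inl a ∈ S := fun a => (hbip _ _ (hlr a b₀)).2 hb₀
    obtain ⟨B, hpos, hmem⟩ := hB _ hb₀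
    refine ⟨B, hpos, min_le_left _ _ |>.trans ?_⟩
    simpa using card_le_card_of_injOn (s := univ) (fun a => h (.inl a))
      (fun a _ => hmem _ (hl a) (hlr a b₀))
      fun a _ a' _ haa' => Sum.inl_injective (hinj (hl a) (hl a') haa')

end Containment

theorem stmt_9_general (r q : ℕ) (hq : 1 ≤ q) (hqr : q ≤ r)
    (s : Fin r → ℕ) (t : Fin q → ℝ) (tN : Fin (r - q) → ℕ)
    (hs : ∀ i, 0 < s i) (ht : ∀ i, 0 < t i)
    (htN : ∀ j : Fin (r - q),
      s (Fin.cast (Nat.add_sub_cancel' hqr) (Fin.natAdd q j)) ≤ tN j)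
    (V : Type) [Fintype V] [DecidableEq V] (g : Finset V → ℝ) (hg : IsWeight g)
    (harr : WArrows r q hqr (fun i => Fin (s (Fin.castLE hqr i)))
      (fun i => kst (s (Fin.castLE hqr i)) (t i))
      (fun j => Fin (s (Fin.cast (Nat.add_sub_cancel' hqr) (Fin.natAdd q j))))
      (fun j => Fin (tN j)) (fun _ _ _ => True) V g) :
    (∑ i : Fin r, (s i - 1)) < {x : V | 0 < wdeg g x}.ncard := by
  classical
  by_contra! hsmall
  set S := univ.filter (0 < wdeg g ·)
  let i₀ : Fin q := ⟨0, hq⟩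
  let z := Fin.castLE hqr i₀
  obtain ⟨ψ, hψ, hfib⟩ := exists_fiber_card_le S (fun i => s i - 1)
    (by rwa [← Set.ncard_coe_finset, coe_filter_univ]) z
  set K := Fintype.card (Fin r → Finset V)
  obtain ⟨ε, hε, hεt⟩ := exists_pos_mul_lt (ht i₀) (2 ^ (Fintype.card V + s z) * K)
  let c := colouringOfSplit (splitBy ψ) (fun A => g A + ε)
  have hc : IsColouring g c := isColouring_colouringOfSplit hg (pairDisj_splitBy ψ)
    (biUnion_splitBy ψ) fun A => lt_add_of_pos_right _ hε
  have hbig : ∀ k B, s k ≤ B.card → subw c k B ≤ K * if k = z then ε else 0 :=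
    fun k B hB => subw_colouringOfSplit_splitBy_le hg hψ
      (fun k => (hfib k).trans_lt (Nat.sub_lt (hs k) one_pos)) hε.le hB
  rcases harr c hc with ⟨i, hi⟩ | ⟨j, hj⟩
  · have hti := le_of_kst_weightSub hi (by positivity) (hbig _)
    by_cases hiz : i = i₀
    · subst hiz
      rw [if_pos rfl, ← mul_assoc] at hti
      linarith
    · rw [if_neg ((Fin.castLE_injective hqr).ne hiz)] at hti
      linarith [ht i]
  · have : Nonempty (Fin (s (Fin.cast (Nat.add_sub_cancel' hqr) (Fin.natAdd q j)))) :=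
      ⟨⟨0, hs _⟩⟩
    have : Nonempty (Fin (tN j)) := ⟨⟨0, (hs _).trans_le (htN j)⟩⟩
    obtain ⟨B, hpos, hB⟩ := exists_le_card_of_completeBipartite_graphSubW hj
    simp only [Fintype.card_fin, min_eq_left (htN j)] at hB
    have hjz : subw c ⟨q + j, _⟩ B ≤ K * if _ = z then ε else 0 := hbig _ B hB
    rw [if_neg (by simp [Fin.ext_iff, z, i₀]; omega), mul_zero] at hjz
    linarith

/-- With `σ = Σ_{i=1}^r (s_i − 1)`, every weight arrowing
`F = (k_{s₁,t₁},…,k_{s_q,t_q},K_{s_{q+1},t_{q+1}},…,K_{s_r,t_r})` has more than `σ`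
vertices of positive degree. -/
theorem stmt_9 (r q : ℕ) (hr : 2 ≤ r) (hq : 1 ≤ q) (hqr : q ≤ r)
    (s : Fin r → ℕ) (t : Fin q → ℝ) (tN : Fin (r - q) → ℕ)
    (hs : ∀ i, 0 < s i) (ht : ∀ i, 0 < t i)
    (htN : ∀ j : Fin (r - q),
      s (Fin.cast (Nat.add_sub_cancel' hqr) (Fin.natAdd q j)) ≤ tN j)
    (V : Type) [Fintype V] [DecidableEq V] (g : Finset V → ℝ) (hg : IsWeight g)
    (harr : WArrows r q hqr (fun i => Fin (s (Fin.castLE hqr i)))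
      (fun i => kst (s (Fin.castLE hqr i)) (t i))
      (fun j => Fin (s (Fin.cast (Nat.add_sub_cancel' hqr) (Fin.natAdd q j))))
      (fun j => Fin (tN j)) (fun _ _ _ => True) V g) :
    (∑ i : Fin r, (s i - 1)) < {x : V | 0 < wdeg g x}.ncard :=
  stmt_9_general r q hq hqr s t tN hs ht htN V g hg harr
end

section
/- Given r ≥ 2, q ≥ 1, positive reals t_1,…,t_q and positive integers s_1,…,s_r, t_{q+1},…,t_r with t_i ≥ s_i for i∈{q+1,…,r}, set F = (k_{s_1,t_1},…,k_{s_q,t_q},K_{s_{q+1},t_{q+1}},…,K_{s_r,t_r}) and σ = Σ_{i=1}^r (s_i−1). Then for every integer s > σ and every real t with 0 < t < sol(L_s), the weight k_{s,t} does not arrow F. -/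
open Finset Filter

/-! Take a feasible solution `w` of `L_s` of value greater than `t`, scale it by some `λ < 1`
so that its value still exceeds `t`, and spread each mass `w_a` uniformly over the ordered
partitions of `{1,…,s}` with part sizes `a`. By symmetry a fixed `k`-set lies in the `i`-th part
of a proportion `C(a_i,k)/C(s,k)` of these partitions, so the constraints of `L_s` keep the total
weight above any `s_i`-set in colour `i ≤ q` below `t_i`, which rules out `k_{s_i,t_i}`; in a
colour `i > q` every part has `s_i - 1` vertices, which rules out `K_{s_i,t_i}`. A tiny extra
weight on the one-coloured tuples turns this into a colouring of `k_{s,t}`. -/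

section OrderedParts

variable {α : Type*} [Fintype α] [DecidableEq α] {r : ℕ}

open Classical in
noncomputable def orderedParts (a : Fin r → ℕ) : Finset (Fin r → Finset α) :=
  {P | PairDisj P ∧ univ.biUnion P = univ ∧ ∀ j, (P j).card = a j}

lemma mem_orderedParts {a : Fin r → ℕ} {P : Fin r → Finset α} :
    P ∈ orderedParts a ↔
      PairDisj P ∧ univ.biUnion P = univ ∧ ∀ j, (P j).card = a j := by
  simp [orderedParts]

lemma orderedParts_nonempty {a : Fin r → ℕ} (ha : ∑ j, a j = Fintype.card α) :
    (orderedParts (α := α) a).Nonempty := by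
  obtain ⟨e⟩ : Nonempty ((Σ j, Fin (a j)) ≃ α) := Fintype.card_eq.mp (by simp [ha])
  refine ⟨fun j => univ.map ⟨fun x => e ⟨j, x⟩, fun x y h => by simpa using e.injective h⟩,
    mem_orderedParts.mpr ⟨fun i j hij => ?_, ?_, fun j => by simp⟩⟩
  · refine Finset.disjoint_left.mpr ?_
    simp only [Finset.mem_map, mem_univ, true_and]
    rintro _ ⟨x, rfl⟩ ⟨y, hxy⟩
    exact hij (congrArg Sigma.fst (e.injective hxy)).symm
  · refine Finset.eq_univ_of_forall fun y => ?_
    obtain ⟨⟨j, x⟩, rfl⟩ := e.surjective y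
    simpa using ⟨j, x, rfl⟩

lemma map_mem_orderedParts {a : Fin r → ℕ} {P : Fin r → Finset α} (σ : Equiv.Perm α)
    (hP : P ∈ orderedParts a) : (fun j => (P j).map σ.toEmbedding) ∈ orderedParts a := by
  obtain ⟨hdisj, hunion, hcard⟩ := mem_orderedParts.mp hP
  refine mem_orderedParts.mpr
    ⟨fun i j hij => (Finset.disjoint_map _).mpr (hdisj i j hij), ?_, by simpa using hcard⟩
  refine Finset.eq_univ_of_forall fun y => ?_
  obtain ⟨j, -, hj⟩ := Finset.mem_biUnion.mp (hunion ▸ Finset.mem_univ (σ.symm y))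
  exact Finset.mem_biUnion.mpr ⟨j, Finset.mem_univ j, by simpa using hj⟩

noncomputable def partsContaining (a : Fin r → ℕ) (i : Fin r) (S : Finset α) :
    Finset (Fin r → Finset α) :=
  (orderedParts a).filter fun P => S ⊆ P i

lemma card_partsContaining_le_map (a : Fin r → ℕ) (i : Fin r) (S : Finset α)
    (σ : Equiv.Perm α) :
    (partsContaining a i S).card ≤ (partsContaining a i (S.map σ.toEmbedding)).card := by
  refine Finset.card_le_card_of_injOn (fun P j => (P j).map σ.toEmbedding) ?_ ?_
  · intro P hP
    simp only [partsContaining, coe_filter, Set.mem_ofPred_eq] at hP ⊢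
    exact ⟨map_mem_orderedParts σ hP.1, Finset.map_subset_map.mpr hP.2⟩
  · intro P _ P' _ h
    funext j
    exact Finset.map_injective _ (congrFun h j)

lemma card_partsContaining_congr (a : Fin r → ℕ) (i : Fin r) {S S' : Finset α}
    (h : S.card = S'.card) :
    (partsContaining a i S).card = (partsContaining a i S').card := by
  obtain ⟨σ, hσ⟩ : ∃ σ : Equiv.Perm α, S.map σ.toEmbedding = S' := by
    obtain ⟨σ, hσ⟩ := (Set.powersetCard.isPretransitive (α := α) (n := S.card)).exists_smul_eq
      ⟨S, rfl⟩ ⟨S', h.symm⟩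
    refine ⟨σ, ?_⟩
    simpa [Set.powersetCard.coe_smul, Finset.smul_finset_def, Finset.map_eq_image,
      Equiv.Perm.smul_def] using congrArg Subtype.val hσ
  subst hσ
  refine le_antisymm (card_partsContaining_le_map a i S σ) ?_
  simpa [Finset.map_map] using card_partsContaining_le_map a i (S.map σ.toEmbedding) σ.symm

lemma card_partsContaining_mul_choose (a : Fin r → ℕ) (i : Fin r) (S : Finset α) :
    (partsContaining a i S).card * (Fintype.card α).choose S.card
      = (a i).choose S.card * (orderedParts (α := α) a).card := by
  set rel : Finset α → (Fin r → Finset α) → Prop := fun S' P => S' ⊆ P i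
  have hcount := sum_card_bipartiteAbove_eq_sum_card_bipartiteBelow
    (s := powersetCard S.card univ) (t := orderedParts a) (r := rel)
  have hbelow : ∀ P ∈ orderedParts a,
      ((powersetCard S.card univ).bipartiteBelow rel P).card
        = (a i).choose S.card := by
    intro P hP
    rw [← (mem_orderedParts.mp hP).2.2 i, ← Finset.card_powersetCard]
    congr 1
    ext S'
    simp [bipartiteBelow, rel, and_comm]
  have habove : ∀ S' ∈ powersetCard S.card (univ : Finset α),
      ((orderedParts a).bipartiteAbove rel S').card
        = (partsContaining a i S).card := by
    intro S' hS'
    rw [card_partsContaining_congr a i (mem_powersetCard.mp hS').2.symm]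
    simp [bipartiteAbove, partsContaining, rel]
  rw [sum_congr rfl habove, sum_congr rfl hbelow, sum_const, sum_const, card_powersetCard,
    card_univ, smul_eq_mul, smul_eq_mul] at hcount
  rw [mul_comm, hcount, mul_comm]

end OrderedParts

section Subweights

variable {V : Type*} [Fintype V] [DecidableEq V] {r : ℕ}

open Classical in
lemma sum_superset_subw {c : (Fin r → Finset V) → ℝ} (hc : ∀ P, ¬ PairDisj P → c P = 0)
    (i : Fin r) (S : Finset V) :
    ∑ B, (if S ⊆ B then subw c i B else 0) = ∑ P, if S ⊆ P i then c P else 0 := by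
  have hterm : ∀ P B, (if S ⊆ B then (if PairDisj P ∧ P i = B then c P else 0) else 0)
      = if P i = B then (if S ⊆ P i then c P else 0) else 0 := by
    intro P B
    by_cases hPB : P i = B
    · subst hPB
      by_cases hP : PairDisj P <;> simp [hP, hc]
    · simp [hPB]
  simp only [subw, ite_sum_zero, hterm]
  rw [Finset.sum_comm]
  simp

lemma exists_of_subw_ne_zero {c : (Fin r → Finset V) → ℝ} {i : Fin r} {B : Finset V}
    (h : subw c i B ≠ 0) : ∃ P, P i = B ∧ c P ≠ 0 := by
  obtain ⟨P, -, hP⟩ := Finset.exists_ne_zero_of_sum_ne_zero h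
  by_cases hPB : PairDisj P ∧ P i = B
  · exact ⟨P, hPB.2, by simpa [hPB] using hP⟩
  · simp [hPB] at hP

end Subweights

lemma eq_map_inl_of_forall_isLeft {W V : Type*} {B : Finset (W ⊕ V)} (h : ∀ b ∈ B, b.isLeft) :
    B = (B.preimage Sum.inl Sum.inl_injective.injOn).map .inl := by
  ext (x | y)
  · simp
  · simpa using fun hy => by simpa using h _ hy

section Extension

variable {W V : Type*} [Fintype W] [DecidableEq W] [Fintype V] [DecidableEq V]

lemma wext_map_inl (g : Finset W → ℝ) (B : Finset W) :
    wext g V (B.map .inl) = g B := by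
  rw [wext, dif_pos (by simp)]
  exact congrArg g (Finset.preimage_map .inl B)

lemma sum_superset_wext (g : Finset W → ℝ) (S : Finset W) :
    ∑ B, (if S.map .inl ⊆ B then wext g V B else 0) = ∑ B, if S ⊆ B then g B else 0 := by
  rw [← Finset.sum_subset (Finset.subset_univ (univ.map (Finset.mapEmbedding .inl).toEmbedding)),
    Finset.sum_map]
  · simp [Finset.map_subset_map, wext_map_inl]
  · intro B _ hB
    rw [wext, dif_neg, ite_self]
    exact fun h => hB (Finset.mem_map.mpr ⟨_, mem_univ _, (eq_map_inl_of_forall_isLeft h).symm⟩)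

lemma exists_card_le_sum_superset_of_weightSub_kst {k : ℕ} {t : ℝ} {g : Finset W → ℝ}
    (ht : 0 < t) (h : WeightSub (kst k t) g) :
    ∃ S : Finset W, S.card = k ∧ t ≤ ∑ B, if S ⊆ B then g B else 0 := by
  obtain ⟨e, w, hw0, -, hlow, hupp⟩ := h
  have hmass : t ≤ ∑ B, if univ.map e ⊆ B then wext g (Fin k) B else 0 := by
    have hfull : t ≤ ∑ B, if univ.map e ⊆ B then w univ B else 0 := by
      simpa [kst] using hlow univ
    refine hfull.trans (Finset.sum_le_sum fun B _ => ?_)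
    split_ifs with hB
    · refine le_trans ?_ (hupp B)
      simpa [hB] using Finset.single_le_sum (f := fun A => if A.map e ⊆ B then w A B else 0)
        (fun A _ => by split_ifs <;> simp [hw0]) (mem_univ univ)
    · rfl
  by_cases hleft : ∀ b ∈ univ.map e, b.isLeft
  · refine ⟨(univ.map e).preimage Sum.inl Sum.inl_injective.injOn, ?_, ?_⟩
    · rw [← Finset.card_map .inl, ← eq_map_inl_of_forall_isLeft hleft]
      simp
    · rwa [← sum_superset_wext (V := Fin k), ← eq_map_inl_of_forall_isLeft hleft]
  · push Not at hleft
    obtain ⟨b, hb, hbr⟩ := hleft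
    refine absurd hmass (not_le.mpr (lt_of_eq_of_lt (Finset.sum_eq_zero fun B _ => ?_) ht))
    split_ifs with hB
    · exact dif_neg fun hall => hbr (hall b (hB hb))
    · rfl

end Extension

section GraphInWeight

variable {U V : Type*} [Fintype V] [DecidableEq V]

/-- One end `y` of the edge lies outside the embedded class; its neighbours are embedded
injectively into one set of positive weight. -/
lemma GraphSubW.exists_card_le {F : SimpleGraph U} {f : Finset V → ℝ} (hF : GraphSubW F f)
    {a b : U} (hab : F.Adj a b) :
    ∃ y, (y = a ∨ y = b) ∧ ∀ N : Finset U, (∀ x ∈ N, F.Adj x y) →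
      ∃ B, 0 < f B ∧ N.card ≤ B.card := by
  obtain ⟨S, h, hbip, hinj, hnb⟩ := hF
  obtain ⟨y, hy, hyS⟩ : ∃ y, (y = a ∨ y = b) ∧ y ∉ S := by
    by_cases ha : a ∈ S
    · exact ⟨b, Or.inr rfl, (hbip a b hab).mp ha⟩
    · exact ⟨a, Or.inl rfl, ha⟩
  refine ⟨y, hy, fun N hN => ?_⟩
  obtain ⟨B, hB, hyB⟩ := hnb y hyS
  have hNS : ∀ x ∈ N, x ∈ S := fun x hx => (hbip x y (hN x hx)).mpr hyS
  refine ⟨B, hB, ?_⟩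
  calc N.card = (N.image h).card :=
        (Finset.card_image_of_injOn fun x hx x' hx' => hinj (hNS x hx) (hNS x' hx')).symm
    _ ≤ B.card := Finset.card_le_card fun z hz => by
        obtain ⟨x, hx, rfl⟩ := Finset.mem_image.mp hz
        exact hyB x (hNS x hx) (hN x hx)

lemma exists_card_le_of_graphSubW_completeBip {m n : ℕ} {f : Finset V → ℝ}
    (hm : 0 < m) (hmn : m ≤ n)
    (h : GraphSubW (bipAdj fun (_ : Fin m) (_ : Fin n) => True) f) :
    ∃ B, 0 < f B ∧ m ≤ B.card := by
  obtain ⟨y, hy | hy, hN⟩ := h.exists_card_le (a := .inl ⟨0, hm⟩)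
    (b := .inr ⟨0, hm.trans_le hmn⟩) (Or.inl ⟨_, _, rfl, rfl, trivial⟩)
  · obtain ⟨B, hB, hcard⟩ := hN (univ.map .inr) (by simp [hy, bipAdj])
    exact ⟨B, hB, hmn.trans (by simpa using hcard)⟩
  · obtain ⟨B, hB, hcard⟩ := hN (univ.map .inl) (by simp [hy, bipAdj])
    exact ⟨B, hB, by simpa using hcard⟩

end GraphInWeight

lemma pairDisj_of_forall_ne_eq_empty {α : Type*} {r : ℕ} {i₀ : Fin r} {P : Fin r → Finset α}
    (hP : ∀ j ≠ i₀, P j = ∅) : PairDisj P := by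
  intro i j hij
  rcases eq_or_ne i i₀ with rfl | hi
  · simp [hP j hij.symm]
  · simp [hP i hi]

section SpreadColouring

variable {α : Type*} [Fintype α] [DecidableEq α] {r : ℕ}

noncomputable def spread (I : Finset (Fin r → ℕ)) (w : (Fin r → ℕ) → ℝ)
    (P : Fin r → Finset α) : ℝ :=
  ∑ a ∈ I, if P ∈ orderedParts a then w a / (orderedParts (α := α) a).card else 0

variable {I : Finset (Fin r → ℕ)} {w : (Fin r → ℕ) → ℝ}

lemma spread_nonneg (hw : ∀ a, 0 ≤ w a) (P : Fin r → Finset α) : 0 ≤ spread I w P :=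
  Finset.sum_nonneg fun a _ => by split_ifs; exacts [div_nonneg (hw a) (Nat.cast_nonneg _), le_rfl]

lemma spread_eq_zero {P : Fin r → Finset α} (hP : ¬ (PairDisj P ∧ univ.biUnion P = univ)) :
    spread I w P = 0 :=
  Finset.sum_eq_zero fun _ _ => if_neg fun h => hP ((mem_orderedParts.mp h).imp_right And.left)

lemma sum_ite_spread (φ : (Fin r → Finset α) → Prop) [DecidablePred φ] :
    ∑ P, (if φ P then spread I w P else 0)
      = ∑ a ∈ I, w a * ((orderedParts a).filter φ).card / (orderedParts (α := α) a).card := by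
  simp only [spread, ite_sum_zero]
  rw [Finset.sum_comm]
  refine Finset.sum_congr rfl fun a _ => ?_
  have hfilter : univ.filter (fun P => φ P ∧ P ∈ orderedParts a) = (orderedParts a).filter φ := by
    ext; simp [and_comm]
  rw [← Finset.sum_filter, ← Finset.sum_filter, Finset.filter_filter, Finset.sum_const,
    nsmul_eq_mul, hfilter]
  ring

lemma card_orderedParts_pos {a : Fin r → ℕ} (ha : ∑ j, a j = Fintype.card α) :
    (0 : ℝ) < (orderedParts (α := α) a).card := by
  exact_mod_cast (orderedParts_nonempty ha).card_pos

lemma sum_spread (hI : ∀ a ∈ I, ∑ j, a j = Fintype.card α) :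
    ∑ P, spread (α := α) I w P = ∑ a ∈ I, w a := by
  have h := sum_ite_spread (α := α) (I := I) (w := w) fun _ => True
  simp only [if_true, Finset.filter_true] at h
  rw [h]
  exact Finset.sum_congr rfl fun a ha =>
    mul_div_cancel_right₀ (w a) (card_orderedParts_pos (α := α) (hI a ha)).ne'

lemma sum_superset_spread (hI : ∀ a ∈ I, ∑ j, a j = Fintype.card α) (i : Fin r)
    (S : Finset α) :
    ∑ P, (if S ⊆ P i then spread I w P else 0)
      = ∑ a ∈ I, w a * (a i).choose S.card / (Fintype.card α).choose S.card := by
  rw [sum_ite_spread]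
  refine Finset.sum_congr rfl fun a ha => ?_
  have hC : (0 : ℝ) < (Fintype.card α).choose S.card := by
    exact_mod_cast Nat.choose_pos S.card_le_univ
  have hcount : ((partsContaining a i S).card : ℝ) * (Fintype.card α).choose S.card
      = (a i).choose S.card * (orderedParts (α := α) a).card := by
    exact_mod_cast card_partsContaining_mul_choose a i S
  rw [← partsContaining, div_eq_div_iff (card_orderedParts_pos (hI a ha)).ne' hC.ne']
  linear_combination w a * hcount

/-- The weight `ε` on the tuples `(∅, …, A, …, ∅)` makes the colouring condition strict also on
the sets `A` of weight zero. -/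
noncomputable def spreadColouring (I : Finset (Fin r → ℕ)) (w : (Fin r → ℕ) → ℝ) (i₀ : Fin r)
    (ε : ℝ) (P : Fin r → Finset α) : ℝ :=
  spread I w P + if ∀ j ≠ i₀, P j = ∅ then ε else 0

variable {i₀ : Fin r} {ε : ℝ}

lemma spread_le_spreadColouring (hε : 0 ≤ ε) (P : Fin r → Finset α) :
    spread I w P ≤ spreadColouring I w i₀ ε P := by
  unfold spreadColouring; split_ifs <;> linarith

lemma spreadColouring_le_spread_add (hε : 0 ≤ ε) (P : Fin r → Finset α) :
    spreadColouring I w i₀ ε P ≤ spread I w P + ε := by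
  unfold spreadColouring; split_ifs <;> linarith

lemma spreadColouring_nonneg (hw : ∀ a, 0 ≤ w a) (hε : 0 ≤ ε) (P : Fin r → Finset α) :
    0 ≤ spreadColouring I w i₀ ε P :=
  (spread_nonneg hw P).trans (spread_le_spreadColouring hε P)

lemma isColouring_spreadColouring {n : ℕ} {T : ℝ}
    (hI : ∀ a ∈ I, ∑ j, a j = n) (hw : ∀ a, 0 ≤ w a) (hε : 0 < ε)
    (hT : T < ∑ a ∈ I, w a) : IsColouring (kst n T) (spreadColouring I w i₀ ε) := by
  classical
  have hc := spreadColouring_nonneg (α := Fin n) (I := I) (i₀ := i₀) hw hε.le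
  refine ⟨hc, fun P hP => ?_, fun A => ?_⟩
  · rw [spreadColouring, spread_eq_zero fun h => hP h.1,
      if_neg fun h => hP (pairDisj_of_forall_ne_eq_empty h), add_zero]
  by_cases hA : A = univ
  · subst hA
    calc kst n T univ < ∑ P, spread I w P := by
          rw [sum_spread (α := Fin n) (by simpa using hI)]
          simpa [kst] using hT
      _ = ∑ P, if PairDisj P ∧ univ.biUnion P = univ then spread I w P else 0 :=
          Finset.sum_congr rfl fun P _ => by split_ifs with h; exacts [rfl, spread_eq_zero h]
      _ ≤ _ := Finset.sum_le_sum fun P _ => by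
          split_ifs; exacts [spread_le_spreadColouring hε.le P, le_rfl]
  · set P₀ := Function.update (fun _ => (∅ : Finset (Fin n))) i₀ A
    have hP₀ : ∀ j ≠ i₀, P₀ j = ∅ := fun j hj => Function.update_of_ne hj _ _
    have hP₀A : PairDisj P₀ ∧ univ.biUnion P₀ = A := by
      refine ⟨pairDisj_of_forall_ne_eq_empty hP₀, ?_⟩
      ext x
      simp [P₀, Function.update_apply, apply_ite (x ∈ ·)]
    calc kst n T A = 0 := if_neg hA
      _ < ε := hε
      _ ≤ spreadColouring I w i₀ ε P₀ := by
          rw [spreadColouring, if_pos hP₀]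
          exact le_add_of_nonneg_left (spread_nonneg hw P₀)
      _ ≤ _ := by
          refine le_of_eq_of_le (if_pos hP₀A).symm (Finset.single_le_sum
            (f := fun P => if PairDisj P ∧ univ.biUnion P = A then _ else 0)
            (fun P _ => ?_) (mem_univ P₀))
          split_ifs; exacts [hc P, le_rfl]

lemma sum_superset_spreadColouring_le (hI : ∀ a ∈ I, ∑ j, a j = Fintype.card α) (hε : 0 ≤ ε)
    (i : Fin r) (S : Finset α) :
    ∑ P, (if S ⊆ P i then spreadColouring I w i₀ ε P else 0)
      ≤ ∑ a ∈ I, w a * (a i).choose S.card / (Fintype.card α).choose S.card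
        + Fintype.card (Fin r → Finset α) * ε := by
  rw [← sum_superset_spread hI, ← Finset.card_univ, ← nsmul_eq_mul, ← Finset.sum_const,
    ← Finset.sum_add_distrib]
  refine Finset.sum_le_sum fun P _ => ?_
  split_ifs
  · exact spreadColouring_le_spread_add hε P
  · exact le_add_of_nonneg_right hε

lemma card_lt_of_subw_spreadColouring_ne_zero {j : Fin r} {m : ℕ} {B : Finset α}
    (hj : j ≠ i₀) (hm : 0 < m) (hI : ∀ a ∈ I, a j < m)
    (hB : subw (spreadColouring I w i₀ ε) j B ≠ 0) : B.card < m := by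
  obtain ⟨P, rfl, hP⟩ := exists_of_subw_ne_zero hB
  by_cases hspread : spread I w P = 0
  · have hP₀ : ∀ j ≠ i₀, P j = ∅ := by
      by_contra h
      exact hP (by simp [spreadColouring, hspread, h])
    simpa [hP₀ j hj] using hm
  · obtain ⟨a, ha, hPa⟩ := Finset.exists_ne_zero_of_sum_ne_zero hspread
    have hPa : P ∈ orderedParts a := by by_contra h; simp [h] at hPa
    exact (mem_orderedParts.mp hPa).2.2 j ▸ hI a ha

end SpreadColouring

lemma exists_feasible_lt_of_lt_solL {r q : ℕ} {hqr : q ≤ r} {s : Fin r → ℕ} {t : Fin q → ℝ}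
    {sv : ℕ} {T : ℝ} (ht : ∀ i, 0 ≤ t i) (hT : T < solL r q hqr s t sv) :
    ∃ w : (Fin r → ℕ) → ℝ, (∀ a, 0 ≤ w a) ∧
      (∀ i : Fin q, ∑ a ∈ PiS r q s sv,
          w a * ((a (Fin.castLE hqr i)).choose (s (Fin.castLE hqr i)) : ℝ)
        ≤ t i * (sv.choose (s (Fin.castLE hqr i)) : ℝ)) ∧
      T < ∑ a ∈ PiS r q s sv, w a := by
  obtain ⟨_, ⟨w, hw, hwt, rfl⟩, hTw⟩ := exists_lt_of_lt_csSup (by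
    exact ⟨0, fun _ => 0, fun _ => le_rfl,
      fun i => by simpa using mul_nonneg (ht i) (Nat.cast_nonneg _), by simp⟩) hT
  exact ⟨w, hw, hwt, hTw⟩

lemma exists_scale_and_slack {ι : Type*} [Finite ι] {T V : ℝ} (K : ℝ) {t : ι → ℝ} (hT : 0 < T)
    (hTV : T < V) (ht : ∀ i, 0 < t i) :
    ∃ l ε : ℝ, 0 < l ∧ T < l * V ∧ 0 < ε ∧ ∀ i, l * t i + K * ε < t i := by
  obtain ⟨l, hlT, hl1⟩ := exists_between ((div_lt_one (hT.trans hTV)).mpr hTV)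
  obtain ⟨ε, hεt, hε⟩ : ∃ ε, (∀ i, K * ε < (1 - l) * t i) ∧ 0 < ε := by
    refine ((Filter.eventually_all.2 fun i => ?_).filter_mono nhdsWithin_le_nhds).and
      self_mem_nhdsWithin |>.exists (f := nhdsWithin (0 : ℝ) (Set.Ioi 0))
    exact ((continuous_const_mul K).tendsto' 0 0 (mul_zero K)).eventually
      (gt_mem_nhds (mul_pos (sub_pos.2 hl1) (ht i)))
  refine ⟨l, ε, (div_pos hT (hT.trans hTV)).trans hlT, (div_lt_iff₀ (hT.trans hTV)).mp hlT, hε,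
    fun i => by linarith [hεt i]⟩

lemma le_of_sum_sub_one_lt {ι : Type*} [Fintype ι] {s : ι → ℕ} {n : ℕ}
    (hsn : ∑ i, (s i - 1) < n) (i : ι) : s i ≤ n := by
  have := Finset.single_le_sum (f := fun j => s j - 1) (fun _ _ => Nat.zero_le _) (mem_univ i)
  omega

lemma exists_colouring_kst_of_lt_solL {r q : ℕ} (hq : 1 ≤ q) (hqr : q ≤ r) {s : Fin r → ℕ}
    {t : Fin q → ℝ} (hs : ∀ i, 0 < s i) (ht : ∀ i, 0 < t i) {sv : ℕ}
    (hsv : ∑ i : Fin r, (s i - 1) < sv) {T : ℝ} (hT : 0 < T)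
    (hTs : T < solL r q hqr s t sv) :
    ∃ c : (Fin r → Finset (Fin sv)) → ℝ, IsColouring (kst sv T) c ∧
      (∀ i : Fin q, ∀ S : Finset (Fin sv), S.card = s (Fin.castLE hqr i) →
        ∑ P, (if S ⊆ P (Fin.castLE hqr i) then c P else 0) < t i) ∧
      (∀ j : Fin r, q ≤ j → ∀ B, subw c j B ≠ 0 → B.card < s j) := by
  have hPi : ∀ a ∈ PiS r q s sv, ∑ j, a j = Fintype.card (Fin sv) := fun a ha => by
    simpa using (Finset.mem_filter.mp ha).2.2
  obtain ⟨w, hw, hwt, hTw⟩ := exists_feasible_lt_of_lt_solL (fun i => (ht i).le) hTs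
  obtain ⟨l, ε, hl, hlT, hε, hlε⟩ :=
    exists_scale_and_slack (Fintype.card (Fin r → Finset (Fin sv))) hT hTw ht
  -- the `ε`-tuples sit in colour `0 < q`, away from the graph colours
  refine ⟨spreadColouring (PiS r q s sv) (l • w) ⟨0, by omega⟩ ε,
    isColouring_spreadColouring (by simpa using hPi) (fun a => mul_nonneg hl.le (hw a)) hε
      (by simpa [Finset.mul_sum] using hlT), fun i S hS => ?_, fun j hj B hB => ?_⟩
  · have hLP : ∑ a ∈ PiS r q s sv, (l • w) a * ((a (Fin.castLE hqr i)).choose S.card : ℝ)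
        / ((Fintype.card (Fin sv)).choose S.card : ℝ) ≤ l * t i := by
      have hC : (0 : ℝ) < (Fintype.card (Fin sv)).choose S.card := by
        simpa [hS] using Nat.choose_pos (le_of_sum_sub_one_lt hsv (Fin.castLE hqr i))
      rw [← Finset.sum_div, div_le_iff₀ hC]
      simpa [hS, Finset.mul_sum, mul_assoc] using mul_le_mul_of_nonneg_left (hwt i) hl.le
    linarith [sum_superset_spreadColouring_le hPi hε.le (Fin.castLE hqr i) S
      (w := l • w) (i₀ := ⟨0, by omega⟩), hlε i]
  · refine card_lt_of_subw_spreadColouring_ne_zero (fun h => ?_) (hs j) (fun a ha => ?_) hB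
    · simp only [Fin.ext_iff] at h
      omega
    · rw [(Finset.mem_filter.mp ha).2.1 j hj]
      exact Nat.sub_lt (hs j) one_pos

theorem stmt_10_general (r q : ℕ) (hq : 1 ≤ q) (hqr : q ≤ r)
    (s : Fin r → ℕ) (t : Fin q → ℝ) (tN : Fin (r - q) → ℕ)
    (hs : ∀ i, 0 < s i) (ht : ∀ i, 0 < t i)
    (htN : ∀ j : Fin (r - q),
      s (Fin.cast (Nat.add_sub_cancel' hqr) (Fin.natAdd q j)) ≤ tN j)
    (sv : ℕ) (hsv : (∑ i : Fin r, (s i - 1)) < sv)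
    (T : ℝ) (hT : 0 < T) (hTs : T < solL r q hqr s t sv) :
    ¬ WArrows r q hqr (fun i => Fin (s (Fin.castLE hqr i)))
      (fun i => kst (s (Fin.castLE hqr i)) (t i))
      (fun j => Fin (s (Fin.cast (Nat.add_sub_cancel' hqr) (Fin.natAdd q j))))
      (fun j => Fin (tN j)) (fun _ _ _ => True) (Fin sv) (kst sv T) := by
  intro hW
  obtain ⟨c, hc, hweight, hgraph⟩ := exists_colouring_kst_of_lt_solL hq hqr hs ht hsv hT hTs
  rcases hW c hc with ⟨i, hi⟩ | ⟨j, hj⟩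
  · obtain ⟨S, hS, hmass⟩ := exists_card_le_sum_superset_of_weightSub_kst (ht i) hi
    rw [sum_superset_subw hc.2.1] at hmass
    exact (hmass.trans_lt (hweight i S hS)).false
  · obtain ⟨B, hB, hcard⟩ := exists_card_le_of_graphSubW_completeBip (hs _) (htN j) hj
    have hidx : Fin.cast (Nat.add_sub_cancel' hqr) (Fin.natAdd q j) = ⟨q + j, by omega⟩ :=
      Fin.ext (by simp)
    exact (hgraph _ (by simp) B hB.ne').not_ge (hidx ▸ hcard)

/-- **Claim 1.** For every integer `s > σ` and every real
`0 < t < sol(L_s)`, the weight `k_{s,t}` does not arrow `F`. -/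
theorem stmt_10 (r q : ℕ) (hr : 2 ≤ r) (hq : 1 ≤ q) (hqr : q ≤ r)
    (s : Fin r → ℕ) (t : Fin q → ℝ) (tN : Fin (r - q) → ℕ)
    (hs : ∀ i, 0 < s i) (ht : ∀ i, 0 < t i)
    (htN : ∀ j : Fin (r - q),
      s (Fin.cast (Nat.add_sub_cancel' hqr) (Fin.natAdd q j)) ≤ tN j)
    (sv : ℕ) (hsv : (∑ i : Fin r, (s i - 1)) < sv)
    (T : ℝ) (hT : 0 < T) (hTs : T < solL r q hqr s t sv) :
    ¬ WArrows r q hqr (fun i => Fin (s (Fin.castLE hqr i)))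
      (fun i => kst (s (Fin.castLE hqr i)) (t i))
      (fun j => Fin (s (Fin.cast (Nat.add_sub_cancel' hqr) (Fin.natAdd q j))))
      (fun j => Fin (tN j)) (fun _ _ _ => True) (Fin sv) (kst sv T) :=
  stmt_10_general r q hq hqr s t tN hs ht htN sv hsv T hT hTs
end

section
/- For every integer n ≥ 4 and every integer m ≥ 1, the complete bipartite graph K_{3,m} arrows (K_{2,n}, K_{2,n}) if and only if m ≥ 6n − 5. In particular, K_{3,6n−5} → (K_{2,n},K_{2,n}). -/
open Finset Filter

/-! For `m > 6n`, every vertex `v` of the large side of `K_{3,m}` sees two of the three small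
vertices in a common colour; the pair and the colour form one of `3 · 2 = 6` types, so some
`n + 1` vertices share a type, and with that pair they span a monochromatic `K_{2,n+1}`.

For `m ≤ 6n`, split the large side into six blocks of at most `n` vertices and colour the
edges at each block by one of the six non-constant maps `Fin 3 → Fin 2`. As `n + 1 > 3`, a copy
of `K_{2,n+1}` has its two-vertex side inside the three-vertex side; a non-constant map is
determined by a monochromatic pair and its colour, so the other `n + 1` vertices of the copy lie
in a single block, which is too small. -/

section Monochromatic

variable {U W κ : Type*}

def MonochromaticCopy (G : SimpleGraph U) (F : SimpleGraph W) (c : Sym2 U → κ) (i : κ)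
    (φ : W ↪ U) : Prop :=
  ∀ a b, F.Adj a b → G.Adj (φ a) (φ b) ∧ c s(φ a, φ b) = i

variable {α β γ δ : Type*}

theorem monochromaticCopy_sumMap (c : Sym2 (α ⊕ β) → κ) (i : κ) (e : γ ↪ α) (g : δ ↪ β)
    (hc : ∀ a d, c s(Sum.inl (e a), Sum.inr (g d)) = i) :
    MonochromaticCopy (completeBipartiteGraph α β) (completeBipartiteGraph γ δ) c i
      (e.sumMap g) := by
  rintro (a | d) (a' | d') hadj
  · simp at hadj
  · exact ⟨by simp, hc a d'⟩
  · exact ⟨by simp, by rw [Sym2.eq_swap]; exact hc a' d⟩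
  · simp at hadj

theorem MonochromaticCopy.exists_embeddings [Fintype α] [Fintype δ] [Nonempty γ]
    (hcard : Fintype.card α < Fintype.card δ) {c : Sym2 (α ⊕ β) → κ} {i : κ}
    {φ : γ ⊕ δ ↪ α ⊕ β}
    (hφ : MonochromaticCopy (completeBipartiteGraph α β) (completeBipartiteGraph γ δ) c i φ) :
    ∃ (e : γ ↪ α) (g : δ ↪ β), ∀ a d, c s(Sum.inl (e a), Sum.inr (g d)) = i := by
  have hadj : ∀ a d, (completeBipartiteGraph α β).Adj (φ (.inl a)) (φ (.inr d)) :=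
    fun a d => (hφ _ _ (by simp)).1
  have hleft : ∀ a, ∃ x, φ (.inl a) = .inl x := by
    intro a
    rcases ha : φ (.inl a) with x | b
    · exact ⟨x, rfl⟩
    have hδ : ∀ d, ∃ x, φ (.inr d) = .inl x := by
      intro d
      have := hadj a d
      rw [ha] at this
      rcases hd : φ (.inr d) with x | b'
      · exact ⟨x, rfl⟩
      · simp [hd] at this
    choose ψ hψ using hδ
    have hψinj : Function.Injective ψ := fun d d' h =>
      Sum.inr_injective (φ.injective (by rw [hψ, hψ, h]))
    exact absurd (Fintype.card_le_of_injective ψ hψinj) hcard.not_ge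
  choose e he using hleft
  have hright : ∀ d, ∃ b, φ (.inr d) = .inr b := by
    intro d
    have := hadj (Classical.arbitrary γ) d
    rw [he] at this
    rcases hd : φ (.inr d) with x | b
    · simp [hd] at this
    · exact ⟨b, rfl⟩
  choose g hg using hright
  refine ⟨⟨e, fun a a' h => ?_⟩, ⟨g, fun d d' h => ?_⟩, fun a d => ?_⟩
  · exact Sum.inl_injective (φ.injective (by rw [he, he, h]))
  · exact Sum.inr_injective (φ.injective (by rw [hg, hg, h]))
  · have := (hφ (.inl a) (.inr d) (by simp)).2
    rwa [he, hg] at this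

end Monochromatic

section Pigeonhole

variable {α κ : Type*} [Fintype α] [Fintype κ] [DecidableEq κ]

theorem exists_embedding_fin_comp_eq_const {n : ℕ} (f : α → κ)
    (h : Fintype.card κ * n < Fintype.card α) :
    ∃ (k : κ) (g : Fin (n + 1) ↪ α), ∀ j, f (g j) = k := by
  obtain ⟨k, hk⟩ := Fintype.exists_lt_card_fiber_of_mul_lt_card f h
  set S := ({a | f a = k} : Finset α)
  refine ⟨k, (Fin.castLEEmb hk).trans (S.equivFin.symm.toEmbedding.trans
    (Function.Embedding.subtype _)), fun j => ?_⟩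
  exact (Finset.mem_filter.1 (S.equivFin.symm (Fin.castLE hk j)).2).2

theorem exists_card_fiber_le {b : ℕ} (h : Fintype.card α ≤ Fintype.card κ * b) :
    ∃ f : α → κ, ∀ k, Fintype.card {a // f a = k} ≤ b := by
  obtain ⟨E⟩ := Function.Embedding.nonempty_of_card_le (β := κ × Fin b) (by simpa using h)
  refine ⟨fun a => (E a).1, fun k => ?_⟩
  have hinj : Function.Injective fun a : {a // (E a).1 = k} => (E a).2 := by
    rintro ⟨a, ha⟩ ⟨a', ha'⟩ h
    exact Subtype.ext (E.injective (Prod.ext (ha.trans ha'.symm) h))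
  simpa using Fintype.card_le_of_injective _ hinj

end Pigeonhole

theorem exists_lt_map_eq_of_card_lt {α β : Type*} [LinearOrder α] [Fintype α] [Fintype β]
    (p : α → β) (h : Fintype.card β < Fintype.card α) : ∃ x y, x < y ∧ p x = p y := by
  obtain ⟨x, y, hne, heq⟩ := Fintype.exists_ne_map_eq_of_card_lt p h
  rcases hne.lt_or_gt with hlt | hlt
  exacts [⟨x, y, hlt, heq⟩, ⟨y, x, hlt, heq.symm⟩]

theorem card_fin_three_lt_pairs : Fintype.card {z : Fin 3 × Fin 3 // z.1 < z.2} = 3 := by decide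

theorem card_fin_three_fin_two_nonconstant :
    Fintype.card {p : Fin 3 → Fin 2 // ∃ x y, p x ≠ p y} = 6 := by decide

theorem eq_of_nonconstant_of_eq_on_pair {p q : Fin 3 → Fin 2} (hp : ∃ x y, p x ≠ p y)
    (hq : ∃ x y, q x ≠ q y) {x y : Fin 3} (hxy : x ≠ y) {i : Fin 2}
    (hpx : p x = i) (hpy : p y = i) (hqx : q x = i) (hqy : q y = i) : p = q := by
  have key : ∀ (p q : Fin 3 → Fin 2) (x y : Fin 3) (i : Fin 2), x ≠ y → p x = i → p y = i →
      q x = i → q y = i → (∃ x y, p x ≠ p y) → (∃ x y, q x ≠ q y) → p = q := by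
    decide
  exact key p q x y i hxy hpx hpy hqx hqy hp hq

def bipartiteColouring {α β κ : Type*} (k₀ : κ) (χ : α → β → κ) : Sym2 (α ⊕ β) → κ :=
  Sym2.lift ⟨fun u w => match u, w with
    | .inl x, .inr b => χ x b
    | .inr b, .inl x => χ x b
    | _, _ => k₀, by rintro (x | b) (y | b') <;> rfl⟩

theorem garrows_three_two_of_six_mul_lt {n m : ℕ} (hm : 6 * n < m) :
    GArrows (completeBipartiteGraph (Fin 3) (Fin m))
      (fun _ : Fin 2 => completeBipartiteGraph (Fin 2) (Fin (n + 1))) := by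
  intro c
  have hpair : ∀ v : Fin m, ∃ x y, x < y ∧ c s(.inl x, .inr v) = c s(.inl y, .inr v) :=
    fun v => exists_lt_map_eq_of_card_lt _ (by simp)
  choose x y hxy hcxy using hpair
  obtain ⟨⟨⟨⟨x₀, y₀⟩, hlt⟩, i⟩, g, hg⟩ := exists_embedding_fin_comp_eq_const
    (fun v => ((⟨(x v, y v), hxy v⟩ : {z : Fin 3 × Fin 3 // z.1 < z.2}), c s(.inl (x v), .inr v)))
    (by simp only [Fintype.card_prod, card_fin_three_lt_pairs, Fintype.card_fin]; omega)
  refine ⟨i, _, monochromaticCopy_sumMap c i (Function.Embedding.embFinTwo hlt.ne) g ?_⟩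
  intro a k
  simp only [Prod.ext_iff, Subtype.ext_iff] at hg
  obtain ⟨⟨hx, hy⟩, hi⟩ := hg k
  fin_cases a
  · show c s(.inl x₀, _) = i
    rwa [← hx]
  · show c s(.inl y₀, _) = i
    rwa [← hy, ← hcxy]

theorem not_garrows_three_two_of_le_six_mul {n m : ℕ} (hn : 3 ≤ n) (hm : m ≤ 6 * n) :
    ¬ GArrows (completeBipartiteGraph (Fin 3) (Fin m))
      (fun _ : Fin 2 => completeBipartiteGraph (Fin 2) (Fin (n + 1))) := by
  obtain ⟨block, hblock⟩ := exists_card_fiber_le (α := Fin m)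
    (κ := {p : Fin 3 → Fin 2 // ∃ x y, p x ≠ p y}) (b := n)
    (by rw [card_fin_three_fin_two_nonconstant, Fintype.card_fin]; omega)
  intro harrows
  obtain ⟨i, φ, hφ⟩ := harrows (bipartiteColouring 0 fun x v => (block v).1 x)
  obtain ⟨e, g, hc⟩ :=
    MonochromaticCopy.exists_embeddings (by simp only [Fintype.card_fin]; omega) hφ
  have hconst : ∀ k, block (g k) = block (g 0) := fun k => Subtype.ext <|
    eq_of_nonconstant_of_eq_on_pair (block _).2 (block _).2 (e.injective.ne zero_ne_one)
      (hc 0 k) (hc 1 k) (hc 0 0) (hc 1 0)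
  have hcard := Fintype.card_le_of_injective
    (fun k => (⟨g k, hconst k⟩ : {v // block v = block (g 0)}))
    fun k k' h => g.injective (congrArg Subtype.val h)
  have hfiber := hblock (block (g 0))
  simp only [Fintype.card_fin] at hcard
  omega

theorem stmt_18_general (n : ℕ) (hn : 4 ≤ n) (m : ℕ) :
    (GArrows (completeBipartiteGraph (Fin 3) (Fin m))
        (fun _ : Fin 2 => completeBipartiteGraph (Fin 2) (Fin n)) ↔ 6 * n - 5 ≤ m) ∧
    GArrows (completeBipartiteGraph (Fin 3) (Fin (6 * n - 5)))
        (fun _ : Fin 2 => completeBipartiteGraph (Fin 2) (Fin n)) := by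
  obtain ⟨n, rfl⟩ : ∃ k, n = k + 1 := ⟨n - 1, by omega⟩
  refine ⟨⟨fun harrows => ?_, fun hm => garrows_three_two_of_six_mul_lt (by omega)⟩,
    garrows_three_two_of_six_mul_lt (by omega)⟩
  by_contra hm
  exact not_garrows_three_two_of_le_six_mul (by omega) (by omega) harrows

/-- For `n ≥ 4` and `m ≥ 1`, `K_{3,m} → (K_{2,n},K_{2,n})` iff
`m ≥ 6n − 5`; in particular `K_{3,6n−5} → (K_{2,n},K_{2,n})`. -/
theorem stmt_18 (n : ℕ) (hn : 4 ≤ n) (m : ℕ) (hm : 1 ≤ m) :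
    (GArrows (completeBipartiteGraph (Fin 3) (Fin m))
        (fun _ : Fin 2 => completeBipartiteGraph (Fin 2) (Fin n)) ↔ 6 * n - 5 ≤ m) ∧
    GArrows (completeBipartiteGraph (Fin 3) (Fin (6 * n - 5)))
        (fun _ : Fin 2 => completeBipartiteGraph (Fin 2) (Fin n)) :=
  stmt_18_general n hn m
end
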